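/- arXiv:1108.0089 — 7 statements merged into one kernel-verified Lean document; each statement's English description precedes it below -/
import Mathlib

section
/- Let k ≠ 0 and let z be a differentiable function with 1 - 2kz(x) ≠ 0. If z satisfies the linear equation z' = Q(x)/(2k) + (Q(x) - 2k P(x)) z, then y(x) = (1 + 2k z(x)) / (k (1 - 2k z(x))) satisfies the Riccati equation y' = P(x) + Q(x) y + k(Q(x) - k P(x)) y². -/
/-! The substitution `y = (1 + 2kz) / (k (1 - 2kz))` is a Möbius transformation of `z` with
derivative `4 z' / (1 - 2kz)²`; inserting the linear equation for `z'`, the result is the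
right-hand side of the Riccati equation evaluated at `y`, by a field identity. -/

section RiccatiSubstitution

variable {𝕜 : Type*}

theorem HasDerivAt.riccati_substitution [NontriviallyNormedField 𝕜] {f : 𝕜 → 𝕜} {f' k x : 𝕜}
    (hf : HasDerivAt f f' x) (hk : k ≠ 0) (hfx : 1 - 2 * k * f x ≠ 0) :
    HasDerivAt (fun t => (1 + 2 * k * f t) / (k * (1 - 2 * k * f t)))
      (4 * f' / (1 - 2 * k * f x) ^ 2) x := by
  have hnum := (hf.const_mul (2 * k)).const_add 1
  have hden := ((hf.const_mul (2 * k)).const_sub 1).const_mul k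
  refine (hnum.div hden (mul_ne_zero hk hfx)).congr_deriv ?_
  field_simp
  ring

theorem riccati_rhs_substitution_eq [Field 𝕜] [CharZero 𝕜] {k p q w : 𝕜}
    (hk : k ≠ 0) (hw : 1 - 2 * k * w ≠ 0) :
    4 * (q / (2 * k) + (q - 2 * k * p) * w) / (1 - 2 * k * w) ^ 2 =
      p + q * ((1 + 2 * k * w) / (k * (1 - 2 * k * w))) +
        k * (q - k * p) * ((1 + 2 * k * w) / (k * (1 - 2 * k * w))) ^ 2 := by
  field_simp
  ring

end RiccatiSubstitution

/-- If z solves the linear equation z' = Q/(2k) + (Q - 2kP) z with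
1 - 2kz ≠ 0, then y = (1 + 2kz)/(k(1 - 2kz)) solves y' = P + Q y + k(Q - kP) y². -/
theorem riccati_linearization
    (I : Set ℝ) (P Q z : ℝ → ℝ) (k : ℝ) (hk : k ≠ 0)
    (hz : ∀ x ∈ I, HasDerivAt z (Q x / (2 * k) + (Q x - 2 * k * P x) * z x) x)
    (hnz : ∀ x ∈ I, 1 - 2 * k * z x ≠ 0)
    (y : ℝ → ℝ) (hy : y = fun x => (1 + 2 * k * z x) / (k * (1 - 2 * k * z x))) :
    ∀ x ∈ I, HasDerivAt y (P x + Q x * y x + k * (Q x - k * P x) * (y x) ^ 2) x := by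
  intro x hx
  subst hy
  exact ((hz x hx).riccati_substitution hk (hnz x hx)).congr_deriv
    (riccati_rhs_substitution_eq hk (hnz x hx))
end

section
/- Let φ, σ be smooth real functions on an interval I with φ(x) ≠ 0, and let A, B, λ be real constants with λ² + Aλ + B = 0. Then y(x) = exp(∫ (σ(x) + λ)/φ(x) dx) satisfies the linear equation φ² y'' + (A + φ' - 2σ) φ y' + (B - Aσ + σ² - φσ') y = 0 on I. -/
/-- If λ² + Aλ + B = 0 then y = exp(∫(σ+λ)/φ dx) solves
φ² y'' + (A + φ' - 2σ)φ y' + (B - Aσ + σ² - φσ') y = 0. -/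
theorem second_order_invariant_solution
    (I : Set ℝ) (hI : IsOpen I) (φ σ φ' σ' S : ℝ → ℝ) (A B lam : ℝ)
    (hφ0 : ∀ x ∈ I, φ x ≠ 0)
    (hφ : ∀ x ∈ I, HasDerivAt φ (φ' x) x)
    (hσ : ∀ x ∈ I, HasDerivAt σ (σ' x) x)
    (hφsm : ContDiffOn ℝ (⊤ : ℕ∞) φ I) (hσsm : ContDiffOn ℝ (⊤ : ℕ∞) σ I)
    (hS : ∀ x ∈ I, HasDerivAt S ((σ x + lam) / φ x) x)
    (hchar : lam ^ 2 + A * lam + B = 0)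
    (y : ℝ → ℝ) (hy : y = fun x => Real.exp (S x)) :
    ∀ x ∈ I,
      (φ x) ^ 2 * deriv (deriv y) x + (A + φ' x - 2 * σ x) * φ x * deriv y x +
        (B - A * σ x + σ x ^ 2 - φ x * σ' x) * y x = 0 := by
  -- first derivative of y on I
  have hy1 : ∀ x ∈ I, HasDerivAt y ((σ x + lam) / φ x * Real.exp (S x)) x := by
    intro x hx
    have := (hS x hx).exp
    rw [hy]
    simpa [mul_comm] using this
  have hderiv1 : ∀ x ∈ I, deriv y x = (σ x + lam) / φ x * Real.exp (S x) :=
    fun x hx => (hy1 x hx).deriv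
  intro x hx
  -- second derivative at x
  have hquot : HasDerivAt (fun t => (σ t + lam) / φ t)
      ((σ' x * φ x - (σ x + lam) * φ' x) / φ x ^ 2) x :=
    ((hσ x hx).add_const lam).div (hφ x hx) (hφ0 x hx)
  have hg : HasDerivAt (fun t => (σ t + lam) / φ t * Real.exp (S t))
      ((σ' x * φ x - (σ x + lam) * φ' x) / φ x ^ 2 * Real.exp (S x)
        + (σ x + lam) / φ x * (Real.exp (S x) * ((σ x + lam) / φ x))) x :=
    hquot.mul (hS x hx).exp
  have heq : deriv y =ᶠ[nhds x] fun t => (σ t + lam) / φ t * Real.exp (S t) := by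
    filter_upwards [hI.mem_nhds hx] with t ht using hderiv1 t ht
  have hd2 : deriv (deriv y) x =
      (σ' x * φ x - (σ x + lam) * φ' x) / φ x ^ 2 * Real.exp (S x)
        + (σ x + lam) / φ x * (Real.exp (S x) * ((σ x + lam) / φ x)) := by
    rw [heq.deriv_eq]; exact hg.deriv
  rw [hd2, hderiv1 x hx, hy]
  have hφx := hφ0 x hx
  have hE := (Real.exp_pos (S x)).ne'
  field_simp
  linear_combination Real.exp (S x) * hchar
end

section
/- Let φ, σ be smooth on an interval I with φ(x) ≠ 0, and suppose the characteristic equation λ² + Aλ + B = 0 has a repeated root λ₁ (i.e., A² = 4B and λ₁ = -A/2). Then for any constants K₁, K₂, the function y(x) = (K₁ + K₂ ∫ dx/φ(x)) · exp(∫ (σ(x) + λ₁)/φ(x) dx) satisfies φ² y'' + (A + φ' - 2σ) φ y' + (B - Aσ + σ² - φσ') y = 0 on I. -/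
/-- repeated-root case: y = (K₁ + K₂∫dx/φ)·exp(∫(σ+λ₁)/φ dx)
solves φ² y'' + (A + φ' - 2σ)φ y' + (B - Aσ + σ² - φσ') y = 0. -/
theorem second_order_repeated_root_solution
    (I : Set ℝ) (hI : IsOpen I) (φ σ φ' σ' S T : ℝ → ℝ) (A B lam₁ K₁ K₂ : ℝ)
    (hφ0 : ∀ x ∈ I, φ x ≠ 0)
    (hφ : ∀ x ∈ I, HasDerivAt φ (φ' x) x)
    (hσ : ∀ x ∈ I, HasDerivAt σ (σ' x) x)
    (hφsm : ContDiffOn ℝ (⊤ : ℕ∞) φ I) (hσsm : ContDiffOn ℝ (⊤ : ℕ∞) σ I)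
    (hrep : A ^ 2 = 4 * B) (hlam : lam₁ = -A / 2)
    (hT : ∀ x ∈ I, HasDerivAt T (1 / φ x) x)
    (hS : ∀ x ∈ I, HasDerivAt S ((σ x + lam₁) / φ x) x)
    (y : ℝ → ℝ) (hy : y = fun x => (K₁ + K₂ * T x) * Real.exp (S x)) :
    ∀ x ∈ I,
      (φ x) ^ 2 * deriv (deriv y) x + (A + φ' x - 2 * σ x) * φ x * deriv y x +
        (B - A * σ x + σ x ^ 2 - φ x * σ' x) * y x = 0 := by
  intro x hx
  have hφx := hφ0 x hx
  set y1 : ℝ → ℝ := fun w =>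
    (K₂ / φ w + (K₁ + K₂ * T w) * ((σ w + lam₁) / φ w)) * Real.exp (S w) with hy1
  -- first derivative
  have hd1 : ∀ z ∈ I, HasDerivAt y (y1 z) z := by
    intro z hz
    have hu : HasDerivAt (fun w => K₁ + K₂ * T w) (K₂ * (1 / φ z)) z :=
      ((hT z hz).const_mul K₂).const_add K₁
    have he : HasDerivAt (fun w => Real.exp (S w))
        (Real.exp (S z) * ((σ z + lam₁) / φ z)) z := (hS z hz).exp
    have : HasDerivAt (fun w => (K₁ + K₂ * T w) * Real.exp (S w)) _ z := hu.mul he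
    rw [hy]
    convert this using 1
    simp only [hy1]
    ring
  have hdy : deriv y x = y1 x := (hd1 x hx).deriv
  -- second derivative
  have hder_eq : deriv y =ᶠ[nhds x] y1 :=
    Filter.eventuallyEq_of_mem (hI.mem_nhds hx) (fun z hz => (hd1 z hz).deriv)
  have hφd := hφ x hx
  have hσd := hσ x hx
  have h1 : HasDerivAt (fun w => K₂ / φ w)
      ((0 * φ x - K₂ * φ' x) / φ x ^ 2) x :=
    (hasDerivAt_const x K₂).div hφd hφx
  have hu : HasDerivAt (fun w => K₁ + K₂ * T w) (K₂ * (1 / φ x)) x :=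
    ((hT x hx).const_mul K₂).const_add K₁
  have hnum : HasDerivAt (fun w => (σ w + lam₁))
      (σ' x) x := by simpa using hσd.add_const lam₁
  have hq : HasDerivAt (fun w => (σ w + lam₁) / φ w)
      ((σ' x * φ x - (σ x + lam₁) * φ' x) / φ x ^ 2) x := hnum.div hφd hφx
  have h2 : HasDerivAt (fun w => (K₁ + K₂ * T w) * ((σ w + lam₁) / φ w))
      (K₂ * (1 / φ x) * ((σ x + lam₁) / φ x)
        + (K₁ + K₂ * T x) * ((σ' x * φ x - (σ x + lam₁) * φ' x) / φ x ^ 2)) x :=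
    hu.mul hq
  have he : HasDerivAt (fun w => Real.exp (S w))
      (Real.exp (S x) * ((σ x + lam₁) / φ x)) x := (hS x hx).exp
  have hd2 : HasDerivAt y1
      (((0 * φ x - K₂ * φ' x) / φ x ^ 2
        + (K₂ * (1 / φ x) * ((σ x + lam₁) / φ x)
          + (K₁ + K₂ * T x) * ((σ' x * φ x - (σ x + lam₁) * φ' x) / φ x ^ 2)))
          * Real.exp (S x)
        + (K₂ / φ x + (K₁ + K₂ * T x) * ((σ x + lam₁) / φ x))
          * (Real.exp (S x) * ((σ x + lam₁) / φ x))) x :=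
    (h1.add h2).mul he
  have hddy : deriv (deriv y) x = _ := hder_eq.deriv_eq.trans hd2.deriv
  rw [hddy, hdy, hy]
  simp only [hy1]
  have hB : B = A ^ 2 / 4 := by linarith
  subst hlam hB
  field_simp
  ring
end

section
/- Let φ, σ be smooth on I with φ ≠ 0 and let λ₁ = γ + iθ, λ₂ = γ - iθ (θ ≠ 0) be complex conjugate roots of λ² + Aλ + B = 0 (so A = -2γ, B = γ² + θ²). Then for any real constants K₁, K₂, the function y(x) = [K₁ cos(θ T(x)) + K₂ sin(θ T(x))] · exp(∫ (σ(x) + γ)/φ(x) dx), where T is an antiderivative of 1/φ, satisfies φ² y'' + (A + φ' - 2σ) φ y' + (B - Aσ + σ² - φσ') y = 0. -/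
/-- complex-root case: with A = -2γ, B = γ² + θ², θ ≠ 0, T' = 1/φ,
y = [K₁ cos(θT) + K₂ sin(θT)]·exp(∫(σ+γ)/φ dx) solves the equation. -/
theorem second_order_complex_roots_solution
    (I : Set ℝ) (hI : IsOpen I) (φ σ φ' σ' S T : ℝ → ℝ)
    (A B γ θ K₁ K₂ : ℝ) (hθ : θ ≠ 0)
    (hA : A = -2 * γ) (hB : B = γ ^ 2 + θ ^ 2)
    (hφ0 : ∀ x ∈ I, φ x ≠ 0)
    (hφ : ∀ x ∈ I, HasDerivAt φ (φ' x) x)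
    (hσ : ∀ x ∈ I, HasDerivAt σ (σ' x) x)
    (hφsm : ContDiffOn ℝ (⊤ : ℕ∞) φ I) (hσsm : ContDiffOn ℝ (⊤ : ℕ∞) σ I)
    (hT : ∀ x ∈ I, HasDerivAt T (1 / φ x) x)
    (hS : ∀ x ∈ I, HasDerivAt S ((σ x + γ) / φ x) x)
    (y : ℝ → ℝ)
    (hy : y = fun x => (K₁ * Real.cos (θ * T x) + K₂ * Real.sin (θ * T x)) *
      Real.exp (S x)) :
    ∀ x ∈ I,
      (φ x) ^ 2 * deriv (deriv y) x + (A + φ' x - 2 * σ x) * φ x * deriv y x +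
        (B - A * σ x + σ x ^ 2 - φ x * σ' x) * y x = 0 := by
  classical
  set u : ℝ → ℝ := fun x => K₁ * Real.cos (θ * T x) + K₂ * Real.sin (θ * T x) with hu_def
  set w : ℝ → ℝ := fun x => K₂ * Real.cos (θ * T x) - K₁ * Real.sin (θ * T x) with hw_def
  set g : ℝ → ℝ := fun x => (θ * w x + (σ x + γ) * u x) * Real.exp (S x) / φ x with hg_def
  have hu : ∀ x ∈ I, HasDerivAt u (θ / φ x * w x) x := by
    intro x hx
    have hT' : HasDerivAt (fun x => θ * T x) (θ * (1 / φ x)) x := (hT x hx).const_mul θ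
    have hc : HasDerivAt (fun x => Real.cos (θ * T x))
        (-Real.sin (θ * T x) * (θ * (1 / φ x))) x :=
      hT'.cos
    have hs : HasDerivAt (fun x => Real.sin (θ * T x))
        (Real.cos (θ * T x) * (θ * (1 / φ x))) x :=
      hT'.sin
    have := (hc.const_mul K₁).add (hs.const_mul K₂)
    convert this using 1 <;> try rfl
    simp only [hw_def]; ring
  have hw : ∀ x ∈ I, HasDerivAt w (θ / φ x * (-u x)) x := by
    intro x hx
    have hT' : HasDerivAt (fun x => θ * T x) (θ * (1 / φ x)) x := (hT x hx).const_mul θ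
    have hc : HasDerivAt (fun x => Real.cos (θ * T x))
        (-Real.sin (θ * T x) * (θ * (1 / φ x))) x :=
      hT'.cos
    have hs : HasDerivAt (fun x => Real.sin (θ * T x))
        (Real.cos (θ * T x) * (θ * (1 / φ x))) x :=
      hT'.sin
    have := (hc.const_mul K₂).sub (hs.const_mul K₁)
    convert this using 1 <;> try rfl
    simp only [hu_def]; ring
  have hE : ∀ x ∈ I, HasDerivAt (fun x => Real.exp (S x))
      (Real.exp (S x) * ((σ x + γ) / φ x)) x := by
    intro x hx
    exact (Real.hasDerivAt_exp (S x)).comp x (hS x hx)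
  have hy' : ∀ x ∈ I, HasDerivAt y (g x) x := by
    intro x hx
    have := (hu x hx).mul (hE x hx)
    rw [hy]
    convert this using 1 <;> try rfl
    have := hφ0 x hx
    simp only [hg_def, hu_def, hw_def]
    field_simp
  have hN : ∀ x ∈ I, HasDerivAt (fun x => (θ * w x + (σ x + γ) * u x) * Real.exp (S x))
      (((θ * (θ / φ x * (-u x))) + ((σ' x) * u x + (σ x + γ) * (θ / φ x * w x))) *
        Real.exp (S x) +
       (θ * w x + (σ x + γ) * u x) * (Real.exp (S x) * ((σ x + γ) / φ x))) x := by
    intro x hx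
    exact (((hw x hx).const_mul θ).add
      (((hσ x hx).add_const γ).mul (hu x hx))).mul (hE x hx)
  intro x hx
  have hφx := hφ0 x hx
  have hg' : HasDerivAt g
      (((((θ * (θ / φ x * (-u x))) + ((σ' x) * u x + (σ x + γ) * (θ / φ x * w x))) *
        Real.exp (S x) +
       (θ * w x + (σ x + γ) * u x) * (Real.exp (S x) * ((σ x + γ) / φ x))) * φ x -
       (θ * w x + (σ x + γ) * u x) * Real.exp (S x) * φ' x) / (φ x) ^ 2) x := by
    exact (hN x hx).div (hφ x hx) hφx
  have heq : deriv y =ᶠ[nhds x] g := by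
    filter_upwards [hI.mem_nhds hx] with t ht
    exact (hy' t ht).deriv
  have hd2 : deriv (deriv y) x = deriv g x := heq.deriv_eq
  rw [hd2, hg'.deriv, (hy' x hx).deriv, hy, hA, hB]
  simp only [hg_def]
  field_simp
  ring
end

section
/- Suppose a second-order equation y'' + f(x) y' + g(x) y = 0 is invariant under the operator X₁ = x^α ∂_x, i.e., x² f'(x) + α x f(x) - α(α-1) = 0 and x g'(x) + 2α g(x) = 0 hold on (0, ∞). Then there exist constants A, B such that f(x) = α/x + A x^{-α} and g(x) = B x^{-2α} on (0, ∞). -/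
/-!
Both determining equations are first-order Euler equations `x u' + c u = 0` on `(0, ∞)`:
for `g` with `c = 2α`, and for `u = f - α/x` with `c = α` (the first equation divided by `x`).
With the integrating factor `x ^ c` each becomes `(u x ^ c)' = 0`, so `u x ^ c` is constant
on the connected set `(0, ∞)`.
-/

open Set

theorem eq_mul_rpow_neg_of_euler_eq (c : ℝ) (u u' : ℝ → ℝ)
    (hu : ∀ x ∈ Ioi (0 : ℝ), HasDerivAt u (u' x) x)
    (heq : ∀ x ∈ Ioi (0 : ℝ), x * u' x + c * u x = 0) :
    ∀ x ∈ Ioi (0 : ℝ), u x = u 1 * x ^ (-c) := by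
  have hderiv : ∀ x ∈ Ioi (0 : ℝ), HasDerivAt (fun y => u y * y ^ c) 0 x := by
    intro x hx
    have hx0 : (0 : ℝ) < x := hx
    refine ((hu x hx).mul (Real.hasDerivAt_rpow_const (Or.inl hx0.ne'))).congr_deriv ?_
    rw [Real.rpow_sub_one hx0.ne']
    field_simp
    linear_combination x ^ c * heq x hx
  have hconst : ∀ x ∈ Ioi (0 : ℝ), u x * x ^ c = u 1 := by
    intro x hx
    simpa using isOpen_Ioi.is_const_of_deriv_eq_zero isPreconnected_Ioi
      (fun y hy => (hderiv y hy).differentiableAt.differentiableWithinAt)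
      (fun y hy => (hderiv y hy).deriv) hx (mem_Ioi.2 one_pos)
  intro x hx
  rw [← hconst x hx, mul_assoc, ← Real.rpow_add hx, add_neg_cancel, Real.rpow_zero, mul_one]

/-- If f, g satisfy the determining equations
x²f' + αxf - α(α-1) = 0 and xg' + 2αg = 0 on (0, ∞), then
f = α/x + A x^{-α} and g = B x^{-2α} for some constants A, B. -/
theorem determining_equations_power_case
    (α : ℝ) (f g f' g' : ℝ → ℝ)
    (hf : ∀ x ∈ Set.Ioi (0 : ℝ), HasDerivAt f (f' x) x)
    (hg : ∀ x ∈ Set.Ioi (0 : ℝ), HasDerivAt g (g' x) x)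
    (heq1 : ∀ x ∈ Set.Ioi (0 : ℝ), x ^ 2 * f' x + α * x * f x - α * (α - 1) = 0)
    (heq2 : ∀ x ∈ Set.Ioi (0 : ℝ), x * g' x + 2 * α * g x = 0) :
    ∃ A B : ℝ, ∀ x ∈ Set.Ioi (0 : ℝ),
      f x = α / x + A * x ^ (-α) ∧ g x = B * x ^ (-2 * α) := by
  set u : ℝ → ℝ := fun x => f x - α / x
  have hu : ∀ x ∈ Ioi (0 : ℝ), HasDerivAt u (f' x + α / x ^ 2) x := by
    intro x hx
    have hinv : HasDerivAt (fun y : ℝ => α / y) (-α / x ^ 2) x := by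
      simpa [div_eq_mul_inv] using (hasDerivAt_inv (mem_Ioi.1 hx).ne').const_mul α
    exact ((hf x hx).sub hinv).congr_deriv (by ring)
  have hu_euler : ∀ x ∈ Ioi (0 : ℝ), x * (f' x + α / x ^ 2) + α * u x = 0 := by
    intro x hx
    calc x * (f' x + α / x ^ 2) + α * u x
        = (x ^ 2 * f' x + α * x * f x - α * (α - 1)) / x := by
          simp only [u]
          field_simp [(mem_Ioi.1 hx).ne']
          ring
      _ = 0 := by rw [heq1 x hx, zero_div]
  refine ⟨u 1, g 1, fun x hx => ⟨?_, ?_⟩⟩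
  · linarith [eq_mul_rpow_neg_of_euler_eq α u _ hu hu_euler x hx]
  · rw [neg_mul]
    exact eq_mul_rpow_neg_of_euler_eq (2 * α) g g' hg (fun y hy => by linarith [heq2 y hy]) x hx
end

section
/- Let φ, σ be smooth on I with φ ≠ 0, and let f, g be differentiable functions satisfying the determining equations φf' + fφ' + 2σ' - φ'' = 0 and φg' + 2φ'g + fσ' + σ'' = 0 on I. Then there exist constants A, B such that f = (A + φ' - 2σ)/φ and g = (B - Aσ + σ² - φσ')/φ² on I (assuming I is connected). -/
/-- A function with zero derivative on an open preconnected set is constant there. -/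
lemma const_of_deriv_zero_on {I : Set ℝ} (hI : IsOpen I) (hIc : IsPreconnected I)
    {h h' : ℝ → ℝ} (hd : ∀ x ∈ I, HasDerivAt h (h' x) x) (hz : ∀ x ∈ I, h' x = 0)
    {x₀ : ℝ} (hx₀ : x₀ ∈ I) : ∀ x ∈ I, h x = h x₀ := by
  have loc : ∀ x ∈ I, ∃ ε > 0, Metric.ball x ε ⊆ I ∧
      ∀ y ∈ Metric.ball x ε, h y = h x := by
    intro x hx
    obtain ⟨ε, hε, hball⟩ := Metric.isOpen_iff.1 hI x hx
    refine ⟨ε, hε, hball, fun y hy => ?_⟩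
    have hconv : Convex ℝ (Metric.ball x ε) := convex_ball x ε
    have hdiff : DifferentiableOn ℝ h (Metric.ball x ε) := fun z hz' =>
      ((hd z (hball hz')).differentiableAt).differentiableWithinAt
    refine hconv.is_const_of_fderivWithin_eq_zero hdiff ?_ hy (Metric.mem_ball_self hε)
    intro z hz'
    have h1 : fderivWithin ℝ h (Metric.ball x ε) z = fderiv ℝ h z :=
      fderivWithin_of_isOpen Metric.isOpen_ball hz'
    have h2 : fderiv ℝ h z = ContinuousLinearMap.smulRight (1 : ℝ →L[ℝ] ℝ) (h' z) :=
      (hd z (hball hz')).hasFDerivAt.fderiv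
    rw [h1, h2, hz z (hball hz')]
    ext t; simp
  by_contra hcon
  push_neg at hcon
  obtain ⟨x, hx, hxne⟩ := hcon
  set S : Set ℝ := {y | y ∈ I ∧ h y = h x₀} with hS
  set T : Set ℝ := {y | y ∈ I ∧ h y ≠ h x₀} with hT
  have hSopen : IsOpen S := by
    rw [Metric.isOpen_iff]
    intro y hy
    obtain ⟨ε, hε, hball, hc⟩ := loc y hy.1
    exact ⟨ε, hε, fun z hz' => ⟨hball hz', (hc z hz').trans hy.2⟩⟩
  have hTopen : IsOpen T := by
    rw [Metric.isOpen_iff]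
    intro y hy
    obtain ⟨ε, hε, hball, hc⟩ := loc y hy.1
    exact ⟨ε, hε, fun z hz' => ⟨hball hz', (hc z hz') ▸ hy.2⟩⟩
  have hcover : I ⊆ S ∪ T := fun y hy => by
    by_cases hh : h y = h x₀
    · exact Or.inl ⟨hy, hh⟩
    · exact Or.inr ⟨hy, hh⟩
  have h1 : (I ∩ S).Nonempty := ⟨x₀, hx₀, hx₀, rfl⟩
  have h2 : (I ∩ T).Nonempty := ⟨x, hx, hx, hxne⟩
  obtain ⟨z, _, hzS, hzT⟩ := hIc S T hSopen hTopen hcover h1 h2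
  exact hzT.2 hzS.2

/-- the general determining equations
φf' + fφ' + 2σ' - φ'' = 0, φg' + 2φ'g + fσ' + σ'' = 0 force
f = (A + φ' - 2σ)/φ and g = (B - Aσ + σ² - φσ')/φ². -/
theorem determining_equations_general
    (I : Set ℝ) (hI : IsOpen I) (hIconn : IsPreconnected I)
    (φ σ φ' σ' φ'' σ'' f g f' g' : ℝ → ℝ)
    (hφ0 : ∀ x ∈ I, φ x ≠ 0)
    (hφsm : ContDiffOn ℝ (⊤ : ℕ∞) φ I) (hσsm : ContDiffOn ℝ (⊤ : ℕ∞) σ I)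
    (hφ : ∀ x ∈ I, HasDerivAt φ (φ' x) x)
    (hφ' : ∀ x ∈ I, HasDerivAt φ' (φ'' x) x)
    (hσ : ∀ x ∈ I, HasDerivAt σ (σ' x) x)
    (hσ' : ∀ x ∈ I, HasDerivAt σ' (σ'' x) x)
    (hf : ∀ x ∈ I, HasDerivAt f (f' x) x)
    (hg : ∀ x ∈ I, HasDerivAt g (g' x) x)
    (heq1 : ∀ x ∈ I, φ x * f' x + f x * φ' x + 2 * σ' x - φ'' x = 0)
    (heq2 : ∀ x ∈ I, φ x * g' x + 2 * φ' x * g x + f x * σ' x + σ'' x = 0) :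
    ∃ A B : ℝ, ∀ x ∈ I,
      f x = (A + φ' x - 2 * σ x) / φ x ∧
      g x = (B - A * σ x + σ x ^ 2 - φ x * σ' x) / (φ x) ^ 2 := by
  rcases Set.eq_empty_or_nonempty I with hIe | ⟨x₀, hx₀⟩
  · exact ⟨0, 0, by simp [hIe]⟩
  -- first integral: h₁ = φ f + 2 σ - φ' is constant
  set h₁ : ℝ → ℝ := fun x => φ x * f x + 2 * σ x - φ' x with hh₁
  have hd₁ : ∀ x ∈ I, HasDerivAt h₁ (φ' x * f x + φ x * f' x + 2 * σ' x - φ'' x) x := by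
    intro x hx
    exact (((hφ x hx).mul (hf x hx)).add ((hσ x hx).const_mul 2)).sub (hφ' x hx)
  have hz₁ : ∀ x ∈ I, φ' x * f x + φ x * f' x + 2 * σ' x - φ'' x = 0 := by
    intro x hx; have := heq1 x hx; linarith
  set A : ℝ := h₁ x₀ with hA
  have hconst₁ : ∀ x ∈ I, φ x * f x + 2 * σ x - φ' x = A :=
    const_of_deriv_zero_on hI hIconn hd₁ hz₁ hx₀
  -- second integral: h₂ = φ² g + A σ - σ² + φ σ' is constant
  set h₂ : ℝ → ℝ := fun x => φ x ^ 2 * g x + A * σ x - σ x ^ 2 + φ x * σ' x with hh₂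
  set h₂' : ℝ → ℝ := fun x => (2 * φ x * φ' x) * g x + φ x ^ 2 * g' x + A * σ' x
      - 2 * σ x * σ' x + (φ' x * σ' x + φ x * σ'' x) with hh₂'
  have hd₂ : ∀ x ∈ I, HasDerivAt h₂ (h₂' x) x := by
    intro x hx
    have hsq : HasDerivAt (fun x => φ x ^ 2) (2 * φ x * φ' x) x := by
      have := (hφ x hx).fun_pow 2
      simpa [mul_comm, mul_assoc, mul_left_comm] using this
    have H := (((hsq.fun_mul (hg x hx)).fun_add ((hσ x hx).const_mul A)).fun_sub
        ((hσ x hx).fun_pow 2)).fun_add ((hφ x hx).fun_mul (hσ' x hx))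
    convert H using 1
    all_goals try with_reducible_and_instances rfl
    simp only [hh₂']
    ring
  have hz₂ : ∀ x ∈ I, h₂' x = 0 := by
    intro x hx
    have e2 := heq2 x hx
    have e1 := hconst₁ x hx
    simp only [hh₂']
    linear_combination φ x * e2 - σ' x * e1
  set B : ℝ := h₂ x₀ with hB
  have hconst₂ : ∀ x ∈ I, φ x ^ 2 * g x + A * σ x - σ x ^ 2 + φ x * σ' x = B :=
    const_of_deriv_zero_on hI hIconn hd₂ hz₂ hx₀
  refine ⟨A, B, fun x hx => ?_⟩
  have hφx := hφ0 x hx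
  constructor
  · have h := hconst₁ x hx
    field_simp
    linear_combination h
  · have h := hconst₂ x hx
    field_simp
    linear_combination h
end

section
/- Let φ, σ be smooth on an interval I with φ ≠ 0, and let A, B, C, λ be real constants with λ³ + Aλ² + Bλ + C = 0. Then y(x) = exp(∫ (σ(x) + λ)/φ(x) dx) satisfies the third-order equation φ³ y''' + [A + 3(φ' - σ)] φ² y'' + [B + Aφ' - 2Aσ + φφ'' + (φ')² - 3(φσ)' + 3σ²] φ y' + [C - Bσ + Aσ² - Aφσ' - σ³ - φ²σ'' - φφ'σ' + 3φσσ'] y = 0 on I. -/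
/-- cubic characteristic roots give invariant solutions of the
third-order equation admitting X = φ∂ₓ + σy∂_y. -/
theorem third_order_invariant_solution
    (I : Set ℝ) (hI : IsOpen I) (φ σ φ' σ' φ'' σ'' S : ℝ → ℝ)
    (A B C lam : ℝ)
    (hφ0 : ∀ x ∈ I, φ x ≠ 0)
    (hφsm : ContDiffOn ℝ (⊤ : ℕ∞) φ I) (hσsm : ContDiffOn ℝ (⊤ : ℕ∞) σ I)
    (hφ : ∀ x ∈ I, HasDerivAt φ (φ' x) x)
    (hφ' : ∀ x ∈ I, HasDerivAt φ' (φ'' x) x)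
    (hσ : ∀ x ∈ I, HasDerivAt σ (σ' x) x)
    (hσ' : ∀ x ∈ I, HasDerivAt σ' (σ'' x) x)
    (hS : ∀ x ∈ I, HasDerivAt S ((σ x + lam) / φ x) x)
    (hchar : lam ^ 3 + A * lam ^ 2 + B * lam + C = 0)
    (y : ℝ → ℝ) (hy : y = fun x => Real.exp (S x)) :
    ∀ x ∈ I,
      (φ x) ^ 3 * deriv (deriv (deriv y)) x +
        (A + 3 * (φ' x - σ x)) * (φ x) ^ 2 * deriv (deriv y) x +
        (B + A * φ' x - 2 * A * σ x + φ x * φ'' x + (φ' x) ^ 2 -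
          3 * (φ' x * σ x + φ x * σ' x) + 3 * σ x ^ 2) * φ x * deriv y x +
        (C - B * σ x + A * σ x ^ 2 - A * φ x * σ' x - σ x ^ 3 -
          (φ x) ^ 2 * σ'' x - φ x * φ' x * σ' x + 3 * φ x * σ x * σ' x) * y x
        = 0 := by
  -- abbreviations
  set r : ℝ → ℝ := fun t => (σ t + lam) / φ t with hr_def
  set rp : ℝ → ℝ := fun t => (σ' t * φ t - (σ t + lam) * φ' t) / (φ t) ^ 2 with hrp_def
  set rpp : ℝ → ℝ := fun t =>
    ((σ'' t * φ t + σ' t * φ' t - (σ' t * φ' t + (σ t + lam) * φ'' t)) * (φ t) ^ 2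
      - (σ' t * φ t - (σ t + lam) * φ' t) * (2 * φ t ^ 1 * φ' t)) / ((φ t) ^ 2) ^ 2 with hrpp_def
  -- first derivative of y
  have hy1 : ∀ t ∈ I, HasDerivAt y (y t * r t) t := by
    intro t ht
    rw [hy]
    simpa [mul_comm] using (hS t ht).exp
  have hr1 : ∀ t ∈ I, HasDerivAt r (rp t) t := by
    intro t ht
    exact ((hσ t ht).add_const lam).div (hφ t ht) (hφ0 t ht)
  have hrp1 : ∀ t ∈ I, HasDerivAt rp (rpp t) t := by
    intro t ht
    exact (((hσ' t ht).mul (hφ t ht)).sub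
      (((hσ t ht).add_const lam).mul (hφ' t ht))).div ((hφ t ht).pow 2)
      (pow_ne_zero 2 (hφ0 t ht))
  -- derivative of g1 = y * r
  have hg1 : ∀ t ∈ I, HasDerivAt (fun s => y s * r s) (y t * r t * r t + y t * rp t) t := by
    intro t ht
    exact (hy1 t ht).mul (hr1 t ht)
  -- derivative of g2 = y * (r*r + rp)
  have hg2 : ∀ t ∈ I, HasDerivAt (fun s => y s * (r s * r s + rp s))
      (y t * r t * (r t * r t + rp t) + y t * ((rp t * r t + r t * rp t) + rpp t)) t := by
    intro t ht
    exact (hy1 t ht).mul (((hr1 t ht).mul (hr1 t ht)).add (hrp1 t ht))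
  -- first deriv equals g1 on I
  have hd1 : ∀ t ∈ I, deriv y t = y t * r t := fun t ht => (hy1 t ht).deriv
  -- second deriv
  have hd2 : ∀ t ∈ I, deriv (deriv y) t = y t * r t * r t + y t * rp t := by
    intro t ht
    have he : deriv y =ᶠ[nhds t] fun s => y s * r s := by
      filter_upwards [hI.mem_nhds ht] with s hs using hd1 s hs
    rw [he.deriv_eq]
    exact (hg1 t ht).deriv
  -- third deriv
  have hd3 : ∀ t ∈ I, deriv (deriv (deriv y)) t =
      y t * r t * (r t * r t + rp t) + y t * ((rp t * r t + r t * rp t) + rpp t) := by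
    intro t ht
    have he : deriv (deriv y) =ᶠ[nhds t] fun s => y s * (r s * r s + rp s) := by
      filter_upwards [hI.mem_nhds ht] with s hs using by rw [hd2 s hs]; ring
    rw [he.deriv_eq]
    exact (hg2 t ht).deriv
  intro x hx
  rw [hd1 x hx, hd2 x hx, hd3 x hx]
  have hφx := hφ0 x hx
  simp only [hr_def, hrp_def, hrpp_def]
  have key : (φ x) ^ 3 * ((y x * ((σ x + lam) / φ x)) * ((σ x + lam) / φ x * ((σ x + lam) / φ x)
      + (σ' x * φ x - (σ x + lam) * φ' x) / (φ x) ^ 2)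
      + y x * (((σ' x * φ x - (σ x + lam) * φ' x) / (φ x) ^ 2 * ((σ x + lam) / φ x)
          + (σ x + lam) / φ x * ((σ' x * φ x - (σ x + lam) * φ' x) / (φ x) ^ 2))
        + ((σ'' x * φ x + σ' x * φ' x - (σ' x * φ' x + (σ x + lam) * φ'' x)) * (φ x) ^ 2
          - (σ' x * φ x - (σ x + lam) * φ' x) * (2 * φ x ^ 1 * φ' x)) / ((φ x) ^ 2) ^ 2)) +
    (A + 3 * (φ' x - σ x)) * (φ x) ^ 2 * (y x * ((σ x + lam) / φ x) * ((σ x + lam) / φ x)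
      + y x * ((σ' x * φ x - (σ x + lam) * φ' x) / (φ x) ^ 2)) +
    (B + A * φ' x - 2 * A * σ x + φ x * φ'' x + (φ' x) ^ 2 -
      3 * (φ' x * σ x + φ x * σ' x) + 3 * σ x ^ 2) * φ x * (y x * ((σ x + lam) / φ x)) +
    (C - B * σ x + A * σ x ^ 2 - A * φ x * σ' x - σ x ^ 3 -
      (φ x) ^ 2 * σ'' x - φ x * φ' x * σ' x + 3 * φ x * σ x * σ' x) * y x
      = y x * (lam ^ 3 + A * lam ^ 2 + B * lam + C) := by
    field_simp
    ring
  rw [key, hchar, mul_zero]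
end
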